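/- Let X be a random vector in ℝ^d with E[X] = 0 that is sub-exponential with parameters (ν², α) with ν, α > 0, and let c > 0. Then E[‖X‖_*² · 1{‖X‖_* ≥ c}] ≤ (2c² + 16ν²)·exp(−c²/(8ν²) + 2d) + (4c² + 96α²)·exp(−c/(4α) + 2d). -/

import Mathlib

open MeasureTheory ProbabilityTheory Matrix Real

noncomputable section

/-- The Hilbert norm `‖x‖ = √⟨x, Qx⟩` induced by a positive definite matrix `Q`. -/
def qnorm {d : ℕ} (Q : Matrix (Fin d) (Fin d) ℝ) (x : Fin d → ℝ) : ℝ :=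
  Real.sqrt (x ⬝ᵥ Q.mulVec x)

/-- The dual norm `‖y‖_* = sup {⟨x, y⟩ : ‖x‖ ≤ 1}`. -/
def qdual {d : ℕ} (Q : Matrix (Fin d) (Fin d) ℝ) (y : Fin d → ℝ) : ℝ :=
  sSup {r : ℝ | ∃ x : Fin d → ℝ, qnorm Q x ≤ 1 ∧ r = x ⬝ᵥ y}

section Lemmas
variable {d : ℕ} {Q : Matrix (Fin d) (Fin d) ℝ}


lemma quad_nonneg (hQ : Q.PosDef) (x : Fin d → ℝ) : 0 ≤ x ⬝ᵥ Q.mulVec x := by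
  rcases eq_or_ne x 0 with rfl | h
  · simp
  · have := hQ.dotProduct_mulVec_pos h; simpa using this.le

lemma qnorm_nonneg (x : Fin d → ℝ) : 0 ≤ qnorm Q x := Real.sqrt_nonneg _

lemma sq_qnorm (hQ : Q.PosDef) (x : Fin d → ℝ) :
    qnorm Q x ^ 2 = x ⬝ᵥ Q.mulVec x := Real.sq_sqrt (quad_nonneg hQ x)

lemma qnorm_pos (hQ : Q.PosDef) {x : Fin d → ℝ} (hx : x ≠ 0) : 0 < qnorm Q x := by
  have := hQ.dotProduct_mulVec_pos hx
  exact Real.sqrt_pos.2 (by simpa using this)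

lemma quad_symm (hQ : Q.PosDef) (x z : Fin d → ℝ) :
    x ⬝ᵥ Q.mulVec z = z ⬝ᵥ Q.mulVec x := by
  have hsym : ∀ i j, Q j i = Q i j := by
    intro i j
    have := congrFun (congrFun hQ.1 i) j
    simpa [Matrix.conjTranspose_apply] using this
  simp only [dotProduct, mulVec, Finset.mul_sum]
  rw [Finset.sum_comm]
  exact Finset.sum_congr rfl fun i _ => Finset.sum_congr rfl fun j _ => by
    rw [hsym i j]; ring

lemma quad_cs (hQ : Q.PosDef) (x z : Fin d → ℝ) :
    x ⬝ᵥ Q.mulVec z ≤ qnorm Q x * qnorm Q z := by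
  have key : ∀ t : ℝ, 0 ≤ qnorm Q x ^ 2 * t ^ 2 - 2 * (x ⬝ᵥ Q.mulVec z) * t + qnorm Q z ^ 2 := by
    intro t
    have h0 := quad_nonneg hQ (z - t • x)
    have e : (z - t • x) ⬝ᵥ Q.mulVec (z - t • x)
        = z ⬝ᵥ Q.mulVec z - 2 * (x ⬝ᵥ Q.mulVec z) * t + (x ⬝ᵥ Q.mulVec x) * t ^ 2 := by
      simp only [Matrix.mulVec_sub, dotProduct_sub, sub_dotProduct, Matrix.mulVec_smul,
        dotProduct_smul, smul_dotProduct, smul_eq_mul]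
      rw [quad_symm hQ z x]
      ring
    rw [e] at h0
    rw [sq_qnorm hQ, sq_qnorm hQ]
    nlinarith [h0]
  have hd := discrim_le_zero (a := qnorm Q x ^ 2) (b := -(2 * (x ⬝ᵥ Q.mulVec z)))
    (c := qnorm Q z ^ 2) (fun t => by nlinarith [key t])
  have hx0 := qnorm_nonneg (Q := Q) x
  have hz0 := qnorm_nonneg (Q := Q) z
  simp only [discrim] at hd
  nlinarith [hd, mul_nonneg hx0 hz0]

lemma qnorm_smul (hQ : Q.PosDef) (r : ℝ) (x : Fin d → ℝ) :
    qnorm Q (r • x) = |r| * qnorm Q x := by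
  unfold qnorm
  have e : (r • x) ⬝ᵥ Q.mulVec (r • x) = r ^ 2 * (x ⬝ᵥ Q.mulVec x) := by
    simp only [Matrix.mulVec_smul, smul_dotProduct, dotProduct_smul, smul_eq_mul]
    ring
  rw [e, Real.sqrt_mul (sq_nonneg r), Real.sqrt_sq_eq_abs]

lemma qnorm_add_le (hQ : Q.PosDef) (x z : Fin d → ℝ) :
    qnorm Q (x + z) ≤ qnorm Q x + qnorm Q z := by
  have h1 : qnorm Q (x + z) ^ 2 ≤ (qnorm Q x + qnorm Q z) ^ 2 := by
    rw [sq_qnorm hQ]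
    have e : (x + z) ⬝ᵥ Q.mulVec (x + z)
        = x ⬝ᵥ Q.mulVec x + 2 * (x ⬝ᵥ Q.mulVec z) + z ⬝ᵥ Q.mulVec z := by
      simp only [Matrix.mulVec_add, dotProduct_add, add_dotProduct]
      rw [quad_symm hQ z x]; ring
    rw [e, ← sq_qnorm hQ x, ← sq_qnorm hQ z]
    nlinarith [quad_cs hQ x z]
  nlinarith [h1, qnorm_nonneg (Q := Q) (x + z), qnorm_nonneg (Q := Q) x,
    qnorm_nonneg (Q := Q) z]


lemma qnorm_zero : qnorm Q (0 : Fin d → ℝ) = 0 := by simp [qnorm]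

lemma quad_inv_mulVec (hQ : Q.PosDef) (y : Fin d → ℝ) : Q.mulVec (Q⁻¹.mulVec y) = y := by
  rw [Matrix.mulVec_mulVec, Matrix.mul_nonsing_inv _ (isUnit_iff_ne_zero.2 hQ.det_pos.ne'),
    Matrix.one_mulVec]

lemma qdual_eq (hQ : Q.PosDef) (y : Fin d → ℝ) :
    qdual Q y = qnorm Q (Q⁻¹.mulVec y) := by
  set w := Q⁻¹.mulVec y with hw
  have hQw : Q.mulVec w = y := quad_inv_mulVec hQ y
  have hub : ∀ r ∈ {r : ℝ | ∃ x, qnorm Q x ≤ 1 ∧ r = x ⬝ᵥ y}, r ≤ qnorm Q w := by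
    rintro r ⟨x, hx, rfl⟩
    calc x ⬝ᵥ y = x ⬝ᵥ Q.mulVec w := by rw [hQw]
    _ ≤ qnorm Q x * qnorm Q w := quad_cs hQ x w
    _ ≤ 1 * qnorm Q w := mul_le_mul_of_nonneg_right hx (qnorm_nonneg w)
    _ = qnorm Q w := one_mul _
  have hmem0 : (0 : ℝ) ∈ {r : ℝ | ∃ x, qnorm Q x ≤ 1 ∧ r = x ⬝ᵥ y} :=
    ⟨0, by simp [qnorm_zero], by simp⟩
  apply le_antisymm
  · exact csSup_le ⟨0, hmem0⟩ hub
  · rcases eq_or_ne w 0 with h0 | h0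
    · rw [h0, qnorm_zero]
      exact le_csSup ⟨qnorm Q w, hub⟩ hmem0
    · apply le_csSup ⟨qnorm Q w, hub⟩
      refine ⟨(qnorm Q w)⁻¹ • w, ?_, ?_⟩
      · rw [qnorm_smul hQ, abs_inv, abs_of_nonneg (qnorm_nonneg w),
          inv_mul_cancel₀ (qnorm_pos hQ h0).ne']
      · rw [smul_dotProduct, ← hQw, smul_eq_mul]
        rw [show w ⬝ᵥ Q.mulVec w = qnorm Q w ^ 2 from (sq_qnorm hQ w).symm]
        field_simp [(qnorm_pos hQ h0).ne']

lemma qdual_nonneg (hQ : Q.PosDef) (y : Fin d → ℝ) : 0 ≤ qdual Q y := by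
  rw [qdual_eq hQ]; exact qnorm_nonneg _

lemma dot_le_qnorm_mul_qdual (hQ : Q.PosDef) (x y : Fin d → ℝ) :
    x ⬝ᵥ y ≤ qnorm Q x * qdual Q y := by
  rw [qdual_eq hQ]
  calc x ⬝ᵥ y = x ⬝ᵥ Q.mulVec (Q⁻¹.mulVec y) := by rw [quad_inv_mulVec hQ]
  _ ≤ _ := quad_cs hQ _ _

lemma continuous_qnorm (hQ : Q.PosDef) : Continuous (qnorm Q) := by
  unfold qnorm
  apply Real.continuous_sqrt.comp
  simp only [Matrix.mulVec, dotProduct]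
  fun_prop

lemma continuous_qdual (hQ : Q.PosDef) : Continuous (qdual Q) := by
  have h : qdual Q = fun y => qnorm Q (Q⁻¹.mulVec y) := funext (qdual_eq hQ)
  rw [h]
  apply (continuous_qnorm hQ).comp
  apply continuous_pi
  intro i
  simp only [Matrix.mulVec, dotProduct]
  fun_prop

-- attained form: if y ≠ 0, there is u with qnorm u = 1 and u ⬝ᵥ y = qdual Q y
lemma qdual_attained (hQ : Q.PosDef) {y : Fin d → ℝ} (hy : y ≠ 0) :
    ∃ u : Fin d → ℝ, qnorm Q u = 1 ∧ u ⬝ᵥ y = qdual Q y := by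
  set w := Q⁻¹.mulVec y with hw
  have hQw : Q.mulVec w = y := quad_inv_mulVec hQ y
  have h0 : w ≠ 0 := by
    intro h; apply hy; rw [← hQw, h, Matrix.mulVec_zero]
  refine ⟨(qnorm Q w)⁻¹ • w, ?_, ?_⟩
  · rw [qnorm_smul hQ, abs_inv, abs_of_nonneg (qnorm_nonneg w),
      inv_mul_cancel₀ (qnorm_pos hQ h0).ne']
  · rw [qdual_eq hQ, ← hw, smul_dotProduct, ← hQw, smul_eq_mul]
    rw [show w ⬝ᵥ Q.mulVec w = qnorm Q w ^ 2 from (sq_qnorm hQ w).symm]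
    rw [sq, ← mul_assoc, inv_mul_cancel₀ (qnorm_pos hQ h0).ne', one_mul]

-- comparison with sup norm
lemma qnorm_comparison (hQ : Q.PosDef) (hd : 1 ≤ d) :
    ∃ m : ℝ, 0 < m ∧ ∀ x : Fin d → ℝ, m * ‖x‖ ≤ qnorm Q x := by
  have hcs : IsCompact (Metric.sphere (0 : Fin d → ℝ) 1) := isCompact_sphere 0 1
  haveI : Nonempty (Fin d) := ⟨⟨0, hd⟩⟩
  have hne : (Metric.sphere (0 : Fin d → ℝ) 1).Nonempty := by
    refine ⟨(1 : Fin d → ℝ), ?_⟩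
    simp [Metric.mem_sphere, dist_eq_norm]
  obtain ⟨x₀, hx₀mem, hx₀min⟩ := hcs.exists_isMinOn hne (continuous_qnorm hQ).continuousOn
  have hx₀ne : x₀ ≠ 0 := by
    intro h
    rw [h] at hx₀mem
    simp at hx₀mem
  refine ⟨qnorm Q x₀, qnorm_pos hQ hx₀ne, fun x => ?_⟩
  rcases eq_or_ne x 0 with rfl | hx
  · simp [qnorm_zero]
  · have hn : ‖x‖ ≠ 0 := norm_ne_zero_iff.2 hx
    have hmem : ‖x‖⁻¹ • x ∈ Metric.sphere (0 : Fin d → ℝ) 1 := by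
      simp [norm_smul, abs_of_nonneg (inv_nonneg.2 (norm_nonneg x)), inv_mul_cancel₀ hn]
    have h3 : qnorm Q x₀ ≤ qnorm Q (‖x‖⁻¹ • x) := hx₀min hmem
    rw [qnorm_smul hQ, abs_inv, abs_of_nonneg (norm_nonneg x)] at h3
    calc qnorm Q x₀ * ‖x‖ ≤ (‖x‖⁻¹ * qnorm Q x) * ‖x‖ :=
        mul_le_mul_of_nonneg_right h3 (norm_nonneg x)
    _ = qnorm Q x := by field_simp

lemma qdual_zero (hQ : Q.PosDef) : qdual Q (0 : Fin d → ℝ) = 0 := by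
  rw [qdual_eq hQ, Matrix.mulVec_zero, qnorm_zero]

lemma qnorm_sub_le (hQ : Q.PosDef) (x z w : Fin d → ℝ) :
    qnorm Q (x - w) ≤ qnorm Q (x - z) + qnorm Q (z - w) := by
  have : x - w = (x - z) + (z - w) := by abel
  rw [this]; exact qnorm_add_le hQ _ _

lemma qball_measure (hQ : Q.PosDef) (t : Fin d → ℝ) {r : ℝ} (hr : 0 < r) :
    volume {z : Fin d → ℝ | qnorm Q (z - t) ≤ r}
      = ENNReal.ofReal (r ^ d) * volume {z : Fin d → ℝ | qnorm Q z ≤ 1} := by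
  have h1 : {z : Fin d → ℝ | qnorm Q (z - t) ≤ r}
      = (fun z : Fin d → ℝ => z + (-t)) ⁻¹' ((fun w : Fin d → ℝ => r⁻¹ • w) ⁻¹'
          {z : Fin d → ℝ | qnorm Q z ≤ 1}) := by
    ext z
    simp only [Set.mem_preimage, Set.mem_setOf_eq, qnorm_smul hQ, abs_inv,
      abs_of_pos hr, ← sub_eq_add_neg]
    rw [inv_mul_le_iff₀ hr, mul_one]
  rw [h1, measure_preimage_add_right, Measure.addHaar_preimage_smul volume
    (inv_ne_zero hr.ne')]
  rw [Module.finrank_fin_fun]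
  congr 1
  rw [inv_pow, inv_inv, abs_of_pos (pow_pos hr d)]


lemma unit_ball_vol_pos (hQ : Q.PosDef) :
    0 < volume {z : Fin d → ℝ | qnorm Q z ≤ 1} := by
  have hopen : IsOpen {z : Fin d → ℝ | qnorm Q z < 1} :=
    isOpen_lt (continuous_qnorm hQ) continuous_const
  have h0 : (0 : Fin d → ℝ) ∈ {z : Fin d → ℝ | qnorm Q z < 1} := by
    simp [Set.mem_setOf_eq, qnorm_zero]
  obtain ⟨ε, hε, hball⟩ := Metric.isOpen_iff.1 hopen 0 h0
  calc (0 : ENNReal) < volume (Metric.ball (0 : Fin d → ℝ) ε) :=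
      Metric.measure_ball_pos volume 0 hε
  _ ≤ volume {z : Fin d → ℝ | qnorm Q z ≤ 1} := by
      apply measure_mono
      exact fun z hz => le_of_lt (show qnorm Q z < 1 from hball hz)

lemma unit_ball_vol_lt_top (hQ : Q.PosDef) (hd : 1 ≤ d) :
    volume {z : Fin d → ℝ | qnorm Q z ≤ 1} < ⊤ := by
  obtain ⟨m, hm, hcomp⟩ := qnorm_comparison hQ hd
  have hsub : {z : Fin d → ℝ | qnorm Q z ≤ 1} ⊆ Metric.closedBall 0 m⁻¹ := by
    intro z hz
    simp only [Metric.mem_closedBall, dist_zero_right]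
    have := hcomp z
    rw [← le_div_iff₀' hm] at this
    calc ‖z‖ ≤ qnorm Q z / m := this
    _ ≤ 1 / m := by gcongr; exact hz
    _ = m⁻¹ := one_div m
  exact lt_of_le_of_lt (measure_mono hsub) measure_closedBall_lt_top

/-- Any finite (1/2)-separated subset of the qnorm unit sphere has at most `5^d` points. -/
lemma separated_card_le (hQ : Q.PosDef) (hd : 1 ≤ d) (T : Finset (Fin d → ℝ))
    (hT1 : ∀ t ∈ T, qnorm Q t = 1)
    (hTsep : ∀ t ∈ T, ∀ t' ∈ T, t ≠ t' → 1/2 < qnorm Q (t - t')) :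
    T.card ≤ 5 ^ d := by
  set B := fun t : Fin d → ℝ => {z : Fin d → ℝ | qnorm Q (z - t) ≤ 1/4} with hB
  have hmeas : ∀ t : Fin d → ℝ, MeasurableSet (B t) := by
    intro t
    apply measurableSet_le
    · exact ((continuous_qnorm hQ).comp (continuous_id.sub continuous_const)).measurable
    · exact measurable_const
  have hdisj : (T : Set (Fin d → ℝ)).PairwiseDisjoint B := by
    intro t ht t' ht' hne
    simp only [Function.onFun, Set.disjoint_left]
    intro z hz hz'
    simp only [hB, Set.mem_setOf_eq] at hz hz'
    have h1 : qnorm Q (t - t') ≤ 1/2 := by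
      calc qnorm Q (t - t') ≤ qnorm Q (t - z) + qnorm Q (z - t') := qnorm_sub_le hQ _ _ _
      _ ≤ 1/4 + 1/4 := by
          apply add_le_add
          · rw [← neg_sub z t, ← neg_one_smul ℝ (z - t), qnorm_smul hQ]
            simpa using hz
          · exact hz'
      _ = 1/2 := by norm_num
    exact absurd (hTsep t ht t' ht' hne) (not_lt.2 h1)
  have hunion : (⋃ t ∈ T, B t) ⊆ {z : Fin d → ℝ | qnorm Q (z - 0) ≤ 5/4} := by
    intro z hz
    simp only [Set.mem_iUnion] at hz
    obtain ⟨t, ht, hzt⟩ := hz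
    simp only [Set.mem_setOf_eq, sub_zero]
    calc qnorm Q z = qnorm Q ((z - t) + t) := by rw [sub_add_cancel]
    _ ≤ qnorm Q (z - t) + qnorm Q t := qnorm_add_le hQ _ _
    _ ≤ 1/4 + 1 := add_le_add hzt (le_of_eq (hT1 t ht))
    _ ≤ 5/4 := by norm_num
  have hsum : ∑ t ∈ T, volume (B t) ≤ volume {z : Fin d → ℝ | qnorm Q (z - 0) ≤ 5/4} := by
    rw [← measure_biUnion_finset hdisj (fun t _ => hmeas t)]
    exact measure_mono hunion
  have hval : ∀ t : Fin d → ℝ, volume (B t)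
      = ENNReal.ofReal ((1/4 : ℝ) ^ d) * volume {z : Fin d → ℝ | qnorm Q z ≤ 1} :=
    fun t => qball_measure hQ t (by norm_num)
  rw [Finset.sum_congr rfl (fun t _ => hval t), Finset.sum_const, nsmul_eq_mul,
    qball_measure hQ 0 (by norm_num : (0:ℝ) < 5/4)] at hsum
  set V := volume {z : Fin d → ℝ | qnorm Q z ≤ 1}
  have hV0 : V ≠ 0 := (unit_ball_vol_pos hQ).ne'
  have hVtop : V ≠ ⊤ := (unit_ball_vol_lt_top hQ hd).ne
  rw [← mul_assoc] at hsum
  have hc2 : (T.card : ENNReal) * ENNReal.ofReal ((1/4 : ℝ) ^ d)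
      ≤ ENNReal.ofReal ((5/4 : ℝ) ^ d) :=
    (ENNReal.mul_le_mul_iff_left hV0 hVtop).1 hsum
  have hcast : (T.card : ENNReal) = ENNReal.ofReal (T.card : ℝ) :=
    (ENNReal.ofReal_natCast _).symm
  rw [hcast, ← ENNReal.ofReal_mul (by positivity)] at hc2
  have hreal : (T.card : ℝ) * (1/4) ^ d ≤ (5/4) ^ d :=
    (ENNReal.ofReal_le_ofReal_iff (by positivity)).1 hc2
  have h4 : (0:ℝ) < (1/4) ^ d := by positivity
  have hfin : (T.card : ℝ) ≤ 5 ^ d := by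
    calc (T.card : ℝ) = ((T.card : ℝ) * (1/4) ^ d) / (1/4) ^ d := by field_simp
    _ ≤ (5/4) ^ d / (1/4) ^ d := by gcongr
    _ = 5 ^ d := by
        rw [div_eq_iff h4.ne', ← mul_pow]; norm_num
  exact_mod_cast hfin


lemma qnorm_sub_comm (hQ : Q.PosDef) (x z : Fin d → ℝ) :
    qnorm Q (x - z) = qnorm Q (z - x) := by
  rw [← neg_sub z x, ← neg_one_smul ℝ (z - x), qnorm_smul hQ]; simp

lemma net_exists (hQ : Q.PosDef) (hd : 1 ≤ d) :
    ∃ T : Finset (Fin d → ℝ), T.card ≤ 5 ^ d ∧ (∀ t ∈ T, qnorm Q t = 1) ∧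
      ∀ x : Fin d → ℝ, qnorm Q x = 1 → ∃ t ∈ T, qnorm Q (x - t) ≤ 1/2 := by
  classical
  set P : ℕ → Prop := fun n => ∃ T : Finset (Fin d → ℝ), T.card = n ∧
    (∀ t ∈ T, qnorm Q t = 1) ∧ ∀ t ∈ T, ∀ t' ∈ T, t ≠ t' → 1/2 < qnorm Q (t - t')
    with hP
  have hP0 : P 0 := ⟨∅, by simp⟩
  have hbound : ∀ n, P n → n ≤ 5 ^ d := by
    rintro n ⟨T, hc, h1, hsep⟩
    rw [← hc]; exact separated_card_le hQ hd T h1 hsep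
  set n := Nat.findGreatest P (5 ^ d) with hn
  have hPn : P n := Nat.findGreatest_spec (Nat.zero_le _) hP0
  obtain ⟨T, hcard, h1, hsep⟩ := hPn
  refine ⟨T, by rw [hcard]; exact hbound n ⟨T, hcard, h1, hsep⟩, h1, ?_⟩
  intro x hx
  by_contra hcon
  push_neg at hcon
  have hxT : x ∉ T := by
    intro hxT
    have h2 := hcon x hxT
    rw [sub_self] at h2
    rw [qnorm_zero] at h2
    norm_num at h2
  have hP' : P (n + 1) := by
    refine ⟨insert x T, by rw [Finset.card_insert_of_notMem hxT, hcard], ?_, ?_⟩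
    · intro t ht
      rcases Finset.mem_insert.1 ht with rfl | ht
      · exact hx
      · exact h1 t ht
    · intro t ht t' ht' hne
      rcases Finset.mem_insert.1 ht with h | h
      · rcases Finset.mem_insert.1 ht' with h' | h'
        · exact absurd (h.trans h'.symm) hne
        · rw [h]; exact hcon t' h'
      · rcases Finset.mem_insert.1 ht' with h' | h'
        · rw [h', qnorm_sub_comm hQ]; exact hcon t h
        · exact hsep t h t' h' hne
  have hle : n + 1 ≤ n := Nat.le_findGreatest (hbound _ hP') hP'
  omega

lemma net_bound (hQ : Q.PosDef) {T : Finset (Fin d → ℝ)}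
    (hT1 : ∀ t ∈ T, qnorm Q t = 1)
    (hTnet : ∀ x : Fin d → ℝ, qnorm Q x = 1 → ∃ t ∈ T, qnorm Q (x - t) ≤ 1/2)
    {y : Fin d → ℝ} (hy : y ≠ 0) :
    ∃ t ∈ T, qdual Q y ≤ 2 * (t ⬝ᵥ y) := by
  obtain ⟨u, hu1, huy⟩ := qdual_attained hQ hy
  obtain ⟨t, htT, htu⟩ := hTnet u hu1
  refine ⟨t, htT, ?_⟩
  have hsplit : u ⬝ᵥ y = t ⬝ᵥ y + (u - t) ⬝ᵥ y := by
    rw [← add_dotProduct]; congr 1; abel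
  have hpair : (u - t) ⬝ᵥ y ≤ qnorm Q (u - t) * qdual Q y :=
    dot_le_qnorm_mul_qdual hQ _ _
  have h2 : qnorm Q (u - t) * qdual Q y ≤ (1/2) * qdual Q y :=
    mul_le_mul_of_nonneg_right htu (qdual_nonneg hQ y)
  have := huy
  nlinarith [qdual_nonneg hQ y]

variable {Ω : Type*} [MeasureSpace Ω] {X : Ω → Fin d → ℝ}

lemma meas_dot (hXmeas : Measurable X) (v : Fin d → ℝ) :
    Measurable (fun om => v ⬝ᵥ X om) := by
  simp only [dotProduct]
  exact Finset.measurable_sum _ fun i _ =>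
    measurable_const.mul ((measurable_pi_apply i).comp hXmeas)

lemma chernoff_single [IsProbabilityMeasure (ℙ : Measure Ω)]
    (hXmeas : Measurable X) (ν α : ℝ) (hν : 0 < ν) (hα : 0 < α)
    (hsub : ∀ v : Fin d → ℝ, qnorm Q v = 1 → ∀ t : ℝ, |t| ≤ 1 / α →
      ∫⁻ om : Ω, ENNReal.ofReal (Real.exp (t * (v ⬝ᵥ X om))) ∂(ℙ : Measure Ω)
        ≤ ENNReal.ofReal (Real.exp (t ^ 2 * ν ^ 2 / 2)))
    {v : Fin d → ℝ} (hv : qnorm Q v = 1) {θ : ℝ} (hθ0 : 0 ≤ θ) (hθ : θ ≤ 1 / α)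
    (u : ℝ) :
    (ℙ : Measure Ω) {om | u ≤ v ⬝ᵥ X om}
      ≤ ENNReal.ofReal (Real.exp (θ ^ 2 * ν ^ 2 / 2 - θ * u)) := by
  have hmeasv := meas_dot hXmeas v
  have hS : MeasurableSet {om : Ω | u ≤ v ⬝ᵥ X om} :=
    measurableSet_le measurable_const hmeasv
  have step1 : (ℙ : Measure Ω) {om | u ≤ v ⬝ᵥ X om}
      ≤ ∫⁻ om : Ω, ENNReal.ofReal (Real.exp (θ * (v ⬝ᵥ X om) - θ * u)) ∂ℙ := by
    rw [← lintegral_indicator_one hS]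
    apply lintegral_mono
    intro om
    by_cases hom : om ∈ {om : Ω | u ≤ v ⬝ᵥ X om}
    · simp only [Set.indicator_of_mem hom, Pi.one_apply]
      have h1 : (0 : ℝ) ≤ θ * (v ⬝ᵥ X om) - θ * u := by
        have hom' : u ≤ v ⬝ᵥ X om := hom
        nlinarith
      have h2 : (1 : ℝ) ≤ Real.exp (θ * (v ⬝ᵥ X om) - θ * u) := by
        rw [← Real.exp_zero]; exact Real.exp_le_exp.2 h1
      exact ENNReal.one_le_ofReal.2 h2
    · rw [Set.indicator_of_notMem hom]
      exact zero_le
  have step2 : ∫⁻ om : Ω, ENNReal.ofReal (Real.exp (θ * (v ⬝ᵥ X om) - θ * u)) ∂ℙ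
      = ENNReal.ofReal (Real.exp (- θ * u)) *
        ∫⁻ om : Ω, ENNReal.ofReal (Real.exp (θ * (v ⬝ᵥ X om))) ∂ℙ := by
    rw [← lintegral_const_mul _ (by
      exact ENNReal.measurable_ofReal.comp (Real.continuous_exp.measurable.comp
        (hmeasv.const_mul θ)))]
    congr 1
    funext om
    rw [← ENNReal.ofReal_mul (Real.exp_nonneg (-θ * u)), ← Real.exp_add]
    congr 1
    ring
  have step3 : ∫⁻ om : Ω, ENNReal.ofReal (Real.exp (θ * (v ⬝ᵥ X om))) ∂ℙ
      ≤ ENNReal.ofReal (Real.exp (θ ^ 2 * ν ^ 2 / 2)) := by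
    apply hsub v hv θ
    rw [abs_of_nonneg hθ0]; exact hθ
  calc (ℙ : Measure Ω) {om | u ≤ v ⬝ᵥ X om}
      ≤ _ := step1
    _ = _ := step2
    _ ≤ ENNReal.ofReal (Real.exp (- θ * u)) * ENNReal.ofReal (Real.exp (θ ^ 2 * ν ^ 2 / 2)) := by
        gcongr
    _ = ENNReal.ofReal (Real.exp (θ ^ 2 * ν ^ 2 / 2 - θ * u)) := by
        rw [← ENNReal.ofReal_mul (Real.exp_nonneg _), ← Real.exp_add]
        congr 2
        ring

lemma tail_bound [IsProbabilityMeasure (ℙ : Measure Ω)]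
    (hQ : Q.PosDef) (hXmeas : Measurable X) (ν α : ℝ) (hν : 0 < ν) (hα : 0 < α)
    (hsub : ∀ v : Fin d → ℝ, qnorm Q v = 1 → ∀ t : ℝ, |t| ≤ 1 / α →
      ∫⁻ om : Ω, ENNReal.ofReal (Real.exp (t * (v ⬝ᵥ X om))) ∂(ℙ : Measure Ω)
        ≤ ENNReal.ofReal (Real.exp (t ^ 2 * ν ^ 2 / 2)))
    {T : Finset (Fin d → ℝ)}
    (hT1 : ∀ t ∈ T, qnorm Q t = 1)
    (hTnet : ∀ x : Fin d → ℝ, qnorm Q x = 1 → ∃ t ∈ T, qnorm Q (x - t) ≤ 1/2)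
    {u : ℝ} (hu : 0 < u) :
    (ℙ : Measure Ω) {om | u ≤ qdual Q (X om)}
      ≤ (T.card : ENNReal) * (ENNReal.ofReal (Real.exp (-(u^2) / (8 * ν^2)))
          + ENNReal.ofReal (Real.exp (-u / (4 * α)))) := by
  have hsubset : {om | u ≤ qdual Q (X om)} ⊆ ⋃ t ∈ T, {om | u/2 ≤ t ⬝ᵥ X om} := by
    intro om hom
    have hom' : u ≤ qdual Q (X om) := hom
    have hXne : X om ≠ 0 := by
      intro h; rw [h, qdual_zero hQ] at hom'; linarith
    obtain ⟨t, htT, hle⟩ := net_bound hQ hT1 hTnet hXne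
    refine Set.mem_biUnion htT ?_
    simp only [Set.mem_setOf_eq]
    linarith
  have key : ∀ t ∈ T, (ℙ : Measure Ω) {om | u/2 ≤ t ⬝ᵥ X om}
      ≤ ENNReal.ofReal (Real.exp (-(u^2) / (8 * ν^2)))
          + ENNReal.ofReal (Real.exp (-u / (4 * α))) := by
    intro t ht
    by_cases hcase : u ≤ 2 * ν^2 / α
    · have hθ0 : (0:ℝ) ≤ u/(2*ν^2) := by positivity
      have hθ : u/(2*ν^2) ≤ 1/α := by
        rw [div_le_div_iff₀ (by positivity) hα]
        rw [le_div_iff₀ hα] at hcase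
        nlinarith
      have hch := chernoff_single hXmeas ν α hν hα hsub (hT1 t ht) hθ0 hθ (u/2)
      have heq : (u/(2*ν^2))^2 * ν^2/2 - (u/(2*ν^2)) * (u/2) = -(u^2)/(8*ν^2) := by
        field_simp
        ring
      rw [heq] at hch
      exact hch.trans le_self_add
    · push_neg at hcase
      have hθ0 : (0:ℝ) ≤ 1/α := by positivity
      have hch := chernoff_single hXmeas ν α hν hα hsub (hT1 t ht) hθ0 le_rfl (u/2)
      have hle : (1/α)^2 * ν^2/2 - (1/α)*(u/2) ≤ -u/(4*α) := by
        rw [div_lt_iff₀ hα] at hcase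
        rw [← sub_nonneg]
        have e : -u/(4*α) - ((1/α)^2 * ν^2/2 - (1/α)*(u/2)) = (u*α - 2*ν^2)/(4*α^2) := by
          field_simp
          ring
        rw [e]
        exact div_nonneg (by linarith) (by positivity)
      exact (hch.trans (ENNReal.ofReal_le_ofReal (Real.exp_le_exp.2 hle))).trans le_add_self
  calc (ℙ : Measure Ω) {om | u ≤ qdual Q (X om)}
      ≤ (ℙ : Measure Ω) (⋃ t ∈ T, {om | u/2 ≤ t ⬝ᵥ X om}) := measure_mono hsubset
    _ ≤ ∑ t ∈ T, (ℙ : Measure Ω) {om | u/2 ≤ t ⬝ᵥ X om} := measure_biUnion_finset_le T _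
    _ ≤ ∑ _t ∈ T, (ENNReal.ofReal (Real.exp (-(u^2) / (8 * ν^2)))
          + ENNReal.ofReal (Real.exp (-u / (4 * α)))) := Finset.sum_le_sum key
    _ = (T.card : ENNReal) * _ := by rw [Finset.sum_const, nsmul_eq_mul]


lemma ioc_lintegral (c b : ℝ) (hcb : c ≤ b) (hc : 0 < c) :
    ∫⁻ u in Set.Ioc c b, ENNReal.ofReal (2*u) = ENNReal.ofReal (b^2 - c^2) := by
  have hint : IntegrableOn (fun u : ℝ => 2*u) (Set.Ioc c b) :=
    (continuous_const.mul continuous_id).integrableOn_Ioc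
  rw [← ofReal_integral_eq_lintegral_ofReal hint]
  · congr 1
    rw [← intervalIntegral.integral_of_le hcb]
    have : ∫ u in c..b, 2*u = 2 * ∫ u in c..b, u := intervalIntegral.integral_const_mul 2 _
    rw [this, show (∫ u in c..b, (u:ℝ)) = (b^2 - c^2)/2 by simp]
    ring
  · filter_upwards [ae_restrict_mem measurableSet_Ioc] with u hu
    simp only [Pi.zero_apply]
    nlinarith [hu.1]

lemma gauss_tendsto (ν : ℝ) (hν : 0 < ν) :
    Filter.Tendsto (fun u : ℝ => -(8*ν^2) * Real.exp (-(u^2)/(8*ν^2)))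
      Filter.atTop (nhds 0) := by
  have h1 : Filter.Tendsto (fun u : ℝ => -(u^2)/(8*ν^2)) Filter.atTop Filter.atBot := by
    apply Filter.Tendsto.atBot_div_const (by positivity)
    exact Filter.tendsto_neg_atTop_atBot.comp (Filter.tendsto_pow_atTop two_ne_zero)
  have h2 := Real.tendsto_exp_atBot.comp h1
  have := h2.const_mul (-(8*ν^2))
  simpa using this

lemma gauss_deriv (ν : ℝ) (hν : 0 < ν) (u : ℝ) :
    HasDerivAt (fun u : ℝ => -(8*ν^2) * Real.exp (-(u^2)/(8*ν^2)))
      (2*u*Real.exp (-(u^2)/(8*ν^2))) u := by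
  have h1 : HasDerivAt (fun u : ℝ => -(u^2)/(8*ν^2)) (-(2*u)/(8*ν^2)) u := by
    have := (hasDerivAt_pow 2 u).neg.div_const (8*ν^2)
    simpa using this
  have h2 := (h1.exp).const_mul (-(8*ν^2))
  refine h2.congr_deriv ?_
  field_simp

lemma gauss_integral (ν c : ℝ) (hν : 0 < ν) (hc : 0 < c) :
    (∫⁻ u in Set.Ioi c, ENNReal.ofReal (2*u*Real.exp (-(u^2)/(8*ν^2))))
      = ENNReal.ofReal (8*ν^2 * Real.exp (-(c^2)/(8*ν^2))) := by
  have hderiv : ∀ u ∈ Set.Ici c, HasDerivAt (fun u : ℝ => -(8*ν^2) * Real.exp (-(u^2)/(8*ν^2)))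
      (2*u*Real.exp (-(u^2)/(8*ν^2))) u := fun u _ => gauss_deriv ν hν u
  have hpos : ∀ u ∈ Set.Ioi c, (0:ℝ) ≤ 2*u*Real.exp (-(u^2)/(8*ν^2)) := by
    intro u hu
    have : (0:ℝ) < u := lt_trans hc hu
    positivity
  have hint : IntegrableOn (fun u : ℝ => 2*u*Real.exp (-(u^2)/(8*ν^2))) (Set.Ioi c) :=
    integrableOn_Ioi_deriv_of_nonneg' hderiv hpos (gauss_tendsto ν hν)
  have hval := integral_Ioi_of_hasDerivAt_of_nonneg' hderiv hpos (gauss_tendsto ν hν)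
  rw [← ofReal_integral_eq_lintegral_ofReal hint]
  · rw [hval]; congr 1; ring
  · filter_upwards [ae_restrict_mem measurableSet_Ioi] with u hu
    exact hpos u hu

lemma exp_lin_tendsto (α : ℝ) (hα : 0 < α) :
    Filter.Tendsto (fun u : ℝ => -(8*α*u + 32*α^2) * Real.exp (-u/(4*α)))
      Filter.atTop (nhds 0) := by
  have hbase : Filter.Tendsto (fun x : ℝ => x * Real.exp (-x)) Filter.atTop (nhds 0) := by
    have := Real.tendsto_pow_mul_exp_neg_atTop_nhds_zero 1
    simpa using this
  have hcomp : Filter.Tendsto (fun u : ℝ => u/(4*α)) Filter.atTop Filter.atTop :=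
    Filter.Tendsto.atTop_div_const (by positivity) Filter.tendsto_id
  have h1 : Filter.Tendsto (fun u : ℝ => (u/(4*α)) * Real.exp (-(u/(4*α))))
      Filter.atTop (nhds 0) := hbase.comp hcomp
  have h2 : Filter.Tendsto (fun u : ℝ => Real.exp (-(u/(4*α)))) Filter.atTop (nhds 0) :=
    Real.tendsto_exp_atBot.comp (Filter.tendsto_neg_atTop_atBot.comp hcomp)
  have hsum := (h1.const_mul (-(32*α^2))).add (h2.const_mul (-(32*α^2)))
  have heq : (fun u : ℝ => -(32*α^2) * ((u/(4*α)) * Real.exp (-(u/(4*α))))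
      + -(32*α^2) * Real.exp (-(u/(4*α))))
      = fun u : ℝ => -(8*α*u + 32*α^2) * Real.exp (-u/(4*α)) := by
    funext u
    have : -(u/(4*α)) = -u/(4*α) := by ring
    rw [this]
    field_simp
    ring
  rw [heq] at hsum
  simpa using hsum

lemma exp_lin_deriv (α : ℝ) (hα : 0 < α) (u : ℝ) :
    HasDerivAt (fun u : ℝ => -(8*α*u + 32*α^2) * Real.exp (-u/(4*α)))
      (2*u*Real.exp (-u/(4*α))) u := by
  have h1 : HasDerivAt (fun u : ℝ => -u/(4*α)) (-1/(4*α)) u := by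
    have := (hasDerivAt_id u).neg.div_const (4*α)
    simpa using this
  have h2 : HasDerivAt (fun u : ℝ => -(8*α*u + 32*α^2)) (-(8*α)) u := by
    have := ((hasDerivAt_id u).const_mul (8*α)).add_const (32*α^2)
    have := this.neg
    exact this.congr_deriv (by ring)
  have h3 := h2.mul h1.exp
  refine h3.congr_deriv ?_
  field_simp
  ring

lemma exp_lin_integral (α c : ℝ) (hα : 0 < α) (hc : 0 < c) :
    (∫⁻ u in Set.Ioi c, ENNReal.ofReal (2*u*Real.exp (-u/(4*α))))
      = ENNReal.ofReal ((8*α*c + 32*α^2) * Real.exp (-c/(4*α))) := by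
  have hderiv : ∀ u ∈ Set.Ici c, HasDerivAt (fun u : ℝ => -(8*α*u + 32*α^2) * Real.exp (-u/(4*α)))
      (2*u*Real.exp (-u/(4*α))) u := fun u _ => exp_lin_deriv α hα u
  have hpos : ∀ u ∈ Set.Ioi c, (0:ℝ) ≤ 2*u*Real.exp (-u/(4*α)) := by
    intro u hu
    have : (0:ℝ) < u := lt_trans hc hu
    positivity
  have hint : IntegrableOn (fun u : ℝ => 2*u*Real.exp (-u/(4*α))) (Set.Ioi c) :=
    integrableOn_Ioi_deriv_of_nonneg' hderiv hpos (exp_lin_tendsto α hα)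
  have hval := integral_Ioi_of_hasDerivAt_of_nonneg' hderiv hpos (exp_lin_tendsto α hα)
  rw [← ofReal_integral_eq_lintegral_ofReal hint]
  · rw [hval]; congr 1; ring
  · filter_upwards [ae_restrict_mem measurableSet_Ioi] with u hu
    exact hpos u hu

lemma five_pow_le_exp (d : ℕ) : (5:ℝ)^d ≤ Real.exp (2*d) := by
  have hexp2 : Real.exp 2 = Real.exp 1 * Real.exp 1 := by
    rw [← Real.exp_add]; norm_num
  have h5 : (5:ℝ) ≤ Real.exp 2 := by
    nlinarith [Real.exp_one_gt_d9]
  calc (5:ℝ)^d ≤ (Real.exp 2)^d := pow_le_pow_left₀ (by norm_num) h5 d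
  _ = Real.exp (2*d) := by
      rw [← Real.exp_nat_mul]
      ring_nf


end Lemmas

/-- Lemma `truncted_second_moment_light_tail`: truncated
second moment bound for the dual norm of a centered sub-exponential vector. -/
theorem statement15
    {d : ℕ} (hd : 1 ≤ d)
    (Q : Matrix (Fin d) (Fin d) ℝ) (hQ : Q.PosDef)
    {Ω : Type*} [MeasureSpace Ω] [IsProbabilityMeasure (ℙ : Measure Ω)]
    (X : Ω → Fin d → ℝ) (hXmeas : Measurable X)
    (hXint : Integrable X (ℙ : Measure Ω))
    (hXmean : ∫ om : Ω, X om ∂(ℙ : Measure Ω) = 0)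
    (ν α : ℝ) (hν : 0 < ν) (hα : 0 < α)
    (hsub : ∀ v : Fin d → ℝ, qnorm Q v = 1 → ∀ t : ℝ, |t| ≤ 1 / α →
      ∫⁻ om : Ω, ENNReal.ofReal (Real.exp (t * (v ⬝ᵥ X om))) ∂(ℙ : Measure Ω)
        ≤ ENNReal.ofReal (Real.exp (t ^ 2 * ν ^ 2 / 2)))
    (c : ℝ) (hc : 0 < c) :
    ∫⁻ om : Ω in {om : Ω | c ≤ qdual Q (X om)},
        ENNReal.ofReal ((qdual Q (X om)) ^ 2) ∂(ℙ : Measure Ω)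
      ≤ ENNReal.ofReal
          ((2 * c ^ 2 + 16 * ν ^ 2) * Real.exp (-(c ^ 2) / (8 * ν ^ 2) + 2 * d)
            + (4 * c ^ 2 + 96 * α ^ 2) * Real.exp (-c / (4 * α) + 2 * d)) := by
  obtain ⟨T, hTcard, hT1, hTnet⟩ := net_exists hQ hd
  have hYmeas : Measurable (fun om => qdual Q (X om)) :=
    (continuous_qdual hQ).measurable.comp hXmeas
  set S := {om : Ω | c ≤ qdual Q (X om)} with hSdef
  have hS : MeasurableSet S := measurableSet_le measurable_const hYmeas
  set N := (T.card : ENNReal) with hNdef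
  have hNtop : N ≠ ⊤ := ENNReal.natCast_ne_top _
  have htail : ∀ u : ℝ, 0 < u → (ℙ : Measure Ω) {om | u ≤ qdual Q (X om)}
      ≤ N * (ENNReal.ofReal (Real.exp (-(u^2) / (8 * ν^2)))
          + ENNReal.ofReal (Real.exp (-u / (4 * α)))) :=
    fun u hu => tail_bound hQ hXmeas ν α hν hα hsub hT1 hTnet hu
  -- Step 1: split off the constant part
  have hsplit : ∫⁻ om in S, ENNReal.ofReal ((qdual Q (X om))^2) ∂(ℙ : Measure Ω)
      ≤ ENNReal.ofReal (c^2) * (ℙ : Measure Ω) S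
        + ∫⁻ om in S, ENNReal.ofReal ((qdual Q (X om))^2 - c^2) ∂(ℙ : Measure Ω) := by
    have hpt : ∀ om ∈ S, ENNReal.ofReal ((qdual Q (X om))^2)
        ≤ ENNReal.ofReal (c^2) + ENNReal.ofReal ((qdual Q (X om))^2 - c^2) := by
      intro om hom
      calc ENNReal.ofReal ((qdual Q (X om))^2)
          = ENNReal.ofReal (c^2 + ((qdual Q (X om))^2 - c^2)) := by congr 1; ring
        _ ≤ _ := ENNReal.ofReal_add_le
    calc ∫⁻ om in S, ENNReal.ofReal ((qdual Q (X om))^2) ∂(ℙ : Measure Ω)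
        ≤ ∫⁻ om in S, (ENNReal.ofReal (c^2)
            + ENNReal.ofReal ((qdual Q (X om))^2 - c^2)) ∂(ℙ : Measure Ω) :=
          setLIntegral_mono' hS hpt
      _ = _ := by
          rw [lintegral_add_left measurable_const, setLIntegral_const]
  -- Step 2: layer-cake representation of the remainder
  set f : Ω → ℝ → ENNReal :=
    fun om u => (Set.Iic (qdual Q (X om))).indicator (fun u => ENNReal.ofReal (2*u)) u
    with hfdef
  have hfunc : Function.uncurry f =
      ({p : Ω × ℝ | p.2 ≤ qdual Q (X p.1)}).indicator
        (fun p => ENNReal.ofReal (2*p.2)) := by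
    funext p
    rcases p with ⟨om, u⟩
    by_cases hcase : u ≤ qdual Q (X om)
    · simp [Function.uncurry, hfdef, Set.indicator_of_mem, hcase, Set.mem_Iic]
    · simp [Function.uncurry, hfdef, Set.indicator_of_notMem, hcase, Set.mem_Iic]
  have hfmeas : Measurable (Function.uncurry f) := by
    rw [hfunc]
    exact (ENNReal.measurable_ofReal.comp (measurable_const.mul measurable_snd)).indicator
      (measurableSet_le measurable_snd (hYmeas.comp measurable_fst))
  have hlayer : ∀ om ∈ S, ENNReal.ofReal ((qdual Q (X om))^2 - c^2)
      = ∫⁻ u in Set.Ioi c, f om u := by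
    intro om hom
    have hom' : c ≤ qdual Q (X om) := hom
    rw [hfdef]
    rw [lintegral_indicator measurableSet_Iic,
      Measure.restrict_restrict measurableSet_Iic, Set.inter_comm,
      Set.Ioi_inter_Iic, ioc_lintegral c _ hom' hc]
  have hswap : ∫⁻ om in S, (∫⁻ u in Set.Ioi c, f om u) ∂(ℙ : Measure Ω)
      = ∫⁻ u in Set.Ioi c, (∫⁻ om in S, f om u ∂(ℙ : Measure Ω)) :=
    lintegral_lintegral_swap hfmeas.aemeasurable
  have hinner : ∀ u ∈ Set.Ioi c, (∫⁻ om in S, f om u ∂(ℙ : Measure Ω))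
      ≤ N * ENNReal.ofReal (2*u*Real.exp (-(u^2) / (8 * ν^2)))
        + N * ENNReal.ofReal (2*u*Real.exp (-u / (4 * α))) := by
    intro u hu
    have hu0 : (0:ℝ) < u := lt_trans hc hu
    have hfeq : (fun om => f om u)
        = ({om : Ω | u ≤ qdual Q (X om)}).indicator (fun _ => ENNReal.ofReal (2*u)) := by
      funext om
      by_cases hcase : u ≤ qdual Q (X om)
      · simp [hfdef, Set.indicator_of_mem, hcase, Set.mem_Iic]
      · simp [hfdef, Set.indicator_of_notMem, hcase, Set.mem_Iic]
    calc ∫⁻ om in S, f om u ∂(ℙ : Measure Ω)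
        ≤ ∫⁻ om, f om u ∂(ℙ : Measure Ω) := setLIntegral_le_lintegral _ _
      _ = ENNReal.ofReal (2*u) * (ℙ : Measure Ω) {om | u ≤ qdual Q (X om)} := by
          rw [hfeq]
          exact lintegral_indicator_const (measurableSet_le measurable_const hYmeas) _
      _ ≤ ENNReal.ofReal (2*u) * (N * (ENNReal.ofReal (Real.exp (-(u^2) / (8 * ν^2)))
            + ENNReal.ofReal (Real.exp (-u / (4 * α))))) :=
          mul_le_mul_right (htail u hu0) _
      _ = N * (ENNReal.ofReal (2*u) * ENNReal.ofReal (Real.exp (-(u^2) / (8 * ν^2))))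
            + N * (ENNReal.ofReal (2*u) * ENNReal.ofReal (Real.exp (-u / (4 * α)))) := by
          ring
      _ = _ := by
          rw [← ENNReal.ofReal_mul (by positivity), ← ENNReal.ofReal_mul (by positivity)]
  have hmeas1 : Measurable (fun u : ℝ => ENNReal.ofReal (2*u*Real.exp (-(u^2) / (8 * ν^2)))) := by
    apply Measurable.ennreal_ofReal
    fun_prop
  have hbig : ∫⁻ u in Set.Ioi c, (∫⁻ om in S, f om u ∂(ℙ : Measure Ω))
      ≤ N * (ENNReal.ofReal (8*ν^2 * Real.exp (-(c^2)/(8*ν^2)))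
          + ENNReal.ofReal ((8*α*c + 32*α^2) * Real.exp (-c/(4*α)))) := by
    calc ∫⁻ u in Set.Ioi c, (∫⁻ om in S, f om u ∂(ℙ : Measure Ω))
        ≤ ∫⁻ u in Set.Ioi c, (N * ENNReal.ofReal (2*u*Real.exp (-(u^2) / (8 * ν^2)))
            + N * ENNReal.ofReal (2*u*Real.exp (-u / (4 * α)))) :=
          setLIntegral_mono' measurableSet_Ioi hinner
      _ = N * (∫⁻ u in Set.Ioi c, ENNReal.ofReal (2*u*Real.exp (-(u^2) / (8 * ν^2))))
            + N * (∫⁻ u in Set.Ioi c, ENNReal.ofReal (2*u*Real.exp (-u / (4 * α)))) := by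
          rw [lintegral_add_left (hmeas1.const_mul N),
            lintegral_const_mul' _ _ hNtop, lintegral_const_mul' _ _ hNtop]
      _ = _ := by
          rw [gauss_integral ν c hν hc, exp_lin_integral α c hα hc, mul_add]
  -- Assemble
  have hR : ∫⁻ om in S, ENNReal.ofReal ((qdual Q (X om))^2 - c^2) ∂(ℙ : Measure Ω)
      ≤ N * (ENNReal.ofReal (8*ν^2 * Real.exp (-(c^2)/(8*ν^2)))
          + ENNReal.ofReal ((8*α*c + 32*α^2) * Real.exp (-c/(4*α)))) := by
    rw [setLIntegral_congr_fun hS hlayer, hswap]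
    exact hbig
  have hmain : ∫⁻ om in S, ENNReal.ofReal ((qdual Q (X om))^2) ∂(ℙ : Measure Ω)
      ≤ N * ENNReal.ofReal (c^2 * Real.exp (-(c^2)/(8*ν^2)) + c^2 * Real.exp (-c/(4*α))
          + 8*ν^2 * Real.exp (-(c^2)/(8*ν^2)) + (8*α*c + 32*α^2) * Real.exp (-c/(4*α))) := by
    calc ∫⁻ om in S, ENNReal.ofReal ((qdual Q (X om))^2) ∂(ℙ : Measure Ω)
        ≤ ENNReal.ofReal (c^2) * (ℙ : Measure Ω) S
            + ∫⁻ om in S, ENNReal.ofReal ((qdual Q (X om))^2 - c^2) ∂(ℙ : Measure Ω) :=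
          hsplit
      _ ≤ ENNReal.ofReal (c^2) * (N * (ENNReal.ofReal (Real.exp (-(c^2) / (8 * ν^2)))
            + ENNReal.ofReal (Real.exp (-c / (4 * α)))))
            + N * (ENNReal.ofReal (8*ν^2 * Real.exp (-(c^2)/(8*ν^2)))
            + ENNReal.ofReal ((8*α*c + 32*α^2) * Real.exp (-c/(4*α)))) :=
          add_le_add (mul_le_mul_right (htail c hc) _) hR
      _ = N * ((ENNReal.ofReal (c^2) * ENNReal.ofReal (Real.exp (-(c^2) / (8 * ν^2)))
            + ENNReal.ofReal (c^2) * ENNReal.ofReal (Real.exp (-c / (4 * α))))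
            + (ENNReal.ofReal (8*ν^2 * Real.exp (-(c^2)/(8*ν^2)))
            + ENNReal.ofReal ((8*α*c + 32*α^2) * Real.exp (-c/(4*α))))) := by
          ring
      _ = _ := by
          rw [← ENNReal.ofReal_mul (by positivity), ← ENNReal.ofReal_mul (by positivity),
            ← ENNReal.ofReal_add (by positivity) (by positivity),
            ← ENNReal.ofReal_add (by positivity) (by positivity),
            ← ENNReal.ofReal_add (by positivity) (by positivity)]
          ring_nf
  have hNle : N ≤ ENNReal.ofReal (Real.exp (2*d)) := by
    calc N = ENNReal.ofReal (T.card : ℝ) := (ENNReal.ofReal_natCast _).symm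
    _ ≤ ENNReal.ofReal ((5:ℝ)^d) :=
        ENNReal.ofReal_le_ofReal (by exact_mod_cast hTcard)
    _ ≤ _ := ENNReal.ofReal_le_ofReal (five_pow_le_exp d)
  have hfinal : Real.exp (2*d) * (c^2 * Real.exp (-(c^2)/(8*ν^2)) + c^2 * Real.exp (-c/(4*α))
      + 8*ν^2 * Real.exp (-(c^2)/(8*ν^2)) + (8*α*c + 32*α^2) * Real.exp (-c/(4*α)))
      ≤ (2 * c ^ 2 + 16 * ν ^ 2) * Real.exp (-(c ^ 2) / (8 * ν ^ 2) + 2 * d)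
        + (4 * c ^ 2 + 96 * α ^ 2) * Real.exp (-c / (4 * α) + 2 * d) := by
    rw [Real.exp_add, Real.exp_add]
    have ha : (0:ℝ) < Real.exp (-(c^2)/(8*ν^2)) := Real.exp_pos _
    have hb : (0:ℝ) < Real.exp (-c/(4*α)) := Real.exp_pos _
    have hE : (0:ℝ) < Real.exp (2*d) := Real.exp_pos _
    have h1 : c^2 * Real.exp (-(c^2)/(8*ν^2)) + 8*ν^2 * Real.exp (-(c^2)/(8*ν^2))
        ≤ (2*c^2 + 16*ν^2) * Real.exp (-(c^2)/(8*ν^2)) := by nlinarith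
    have h2 : c^2 * Real.exp (-c/(4*α)) + (8*α*c + 32*α^2) * Real.exp (-c/(4*α))
        ≤ (4*c^2 + 96*α^2) * Real.exp (-c/(4*α)) := by
      nlinarith [sq_nonneg (c - 2*α), mul_pos hc hα]
    calc Real.exp (2*d) * (c^2 * Real.exp (-(c^2)/(8*ν^2)) + c^2 * Real.exp (-c/(4*α))
        + 8*ν^2 * Real.exp (-(c^2)/(8*ν^2)) + (8*α*c + 32*α^2) * Real.exp (-c/(4*α)))
        = ((c^2 * Real.exp (-(c^2)/(8*ν^2)) + 8*ν^2 * Real.exp (-(c^2)/(8*ν^2)))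
          + (c^2 * Real.exp (-c/(4*α)) + (8*α*c + 32*α^2) * Real.exp (-c/(4*α))))
          * Real.exp (2*d) := by ring
      _ ≤ ((2*c^2 + 16*ν^2) * Real.exp (-(c^2)/(8*ν^2))
          + (4*c^2 + 96*α^2) * Real.exp (-c/(4*α))) * Real.exp (2*d) :=
          mul_le_mul_of_nonneg_right (add_le_add h1 h2) hE.le
      _ = _ := by ring
  calc ∫⁻ om in S, ENNReal.ofReal ((qdual Q (X om))^2) ∂(ℙ : Measure Ω)
      ≤ N * ENNReal.ofReal (c^2 * Real.exp (-(c^2)/(8*ν^2)) + c^2 * Real.exp (-c/(4*α))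
          + 8*ν^2 * Real.exp (-(c^2)/(8*ν^2)) + (8*α*c + 32*α^2) * Real.exp (-c/(4*α))) :=
        hmain
    _ ≤ ENNReal.ofReal (Real.exp (2*d)) * ENNReal.ofReal (c^2 * Real.exp (-(c^2)/(8*ν^2))
          + c^2 * Real.exp (-c/(4*α)) + 8*ν^2 * Real.exp (-(c^2)/(8*ν^2))
          + (8*α*c + 32*α^2) * Real.exp (-c/(4*α))) :=
        mul_le_mul_left hNle _
    _ = ENNReal.ofReal (Real.exp (2*d) * (c^2 * Real.exp (-(c^2)/(8*ν^2))
          + c^2 * Real.exp (-c/(4*α)) + 8*ν^2 * Real.exp (-(c^2)/(8*ν^2))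
          + (8*α*c + 32*α^2) * Real.exp (-c/(4*α)))) :=
        (ENNReal.ofReal_mul (Real.exp_nonneg _)).symm
    _ ≤ _ := ENNReal.ofReal_le_ofReal hfinal


end
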